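/- Let γ be a permutation word of Σ. Then for every word w over Σ and every c ∈ ℕ, ι(γ^c · w) = c + ι(w), where γ^c denotes the c-fold concatenation of γ. -/

import Mathlib

open List

section Defs

variable {α : Type*}

/-- A word `w` is `k`-universal if every word of length at most `k` is a subsequence of `w`. -/
def IsKUniversal [Fintype α] (k : ℕ) (w : List α) : Prop :=
  ∀ u : List α, u.length ≤ k → u.Sublist w

/-- The universality index `ι(w)`: the largest `k` such that `w` is `k`-universal. -/
noncomputable def univIndex [Fintype α] (w : List α) : ℕ :=
  sSup {k | IsKUniversal k w}

/-- `c`-fold concatenation (power) of a word. -/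
def wpow (u : List α) (c : ℕ) : List α := (List.replicate c u).flatten

/-- Auxiliary (fuelled) computation of the arch factorization: returns the list of
arches and the rest. Each arch is the shortest prefix of the remaining suffix
containing every letter of the alphabet. -/
noncomputable def archFactAux [Fintype α] [DecidableEq α] :
    ℕ → List α → List (List α) × List α
  | 0, w => ([], w)
  | fuel + 1, w =>
    if Finset.univ ⊆ w.toFinset then
      let n := sInf {n | Finset.univ ⊆ (w.take n).toFinset}
      let p := archFactAux fuel (w.drop n)
      (w.take n :: p.1, p.2)
    else ([], w)

/-- The arch factorization of `w`: the list of arches together with the rest. -/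
noncomputable def archFact [Fintype α] [DecidableEq α] (w : List α) :
    List (List α) × List α :=
  archFactAux w.length w

/-- `γ(w)`: the distinct letters of `w` in order of their first occurrence. -/
def gammaWord [DecidableEq α] (w : List α) : List α := w.reverse.dedup.reverse

/-- The suffix of `w` strictly after the first occurrence of the letter `a`. -/
def afterFirst [DecidableEq α] (a : α) (w : List α) : List α :=
  w.drop (w.idxOf a + 1)

/-- `ι_a(w)`: the universality index of the suffix of `w` after the first occurrence of `a`. -/
noncomputable def iotaLetter [Fintype α] [DecidableEq α] (a : α) (w : List α) : ℕ :=
  univIndex (afterFirst a w)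

/-- `R_a(w)`: the alphabet of the rest of the arch factorization of the suffix of `w`
after the first occurrence of `a`. -/
noncomputable def restLetter [Fintype α] [DecidableEq α] (a : α) (w : List α) : Finset α :=
  ((archFact (afterFirst a w)).2).toFinset

/-- `Subseq_k(w)`: the set of subsequences of `w` of length at most `k`. -/
def subseqK (k : ℕ) (w : List α) : Set (List α) :=
  {u | u.length ≤ k ∧ u.Sublist w}

/-- Simon's congruence `u ∼_k v`. -/
def SimonCongr (k : ℕ) (u v : List α) : Prop := subseqK k u = subseqK k v

/-- Applying a substitution `h` to a pattern: replace each variable occurrence by its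
image and leave terminal letters unchanged. -/
def applySub {X : Type*} (h : X → List α) (p : List (α ⊕ X)) : List α :=
  p.flatMap (Sum.elim (fun a => [a]) h)

/-- A permutation word of the alphabet: every letter occurs exactly once. -/
def IsPermWord [DecidableEq α] (γ : List α) : Prop :=
  ∀ a : α, γ.count a = 1

end Defs

/-!
A permutation word `γ` contains every letter, so `γ` absorbs the first letter of any word
and `ι(γ w) ≥ ι(w) + 1`. Conversely, let `a` be the last letter of `γ`; it occurs nowhere
earlier in `γ`, so an embedding of `a u` into `γ w` must send `a` to that last position or
into `w`, and either way `u` embeds into `w`. Hence `γ w` is `(k+1)`-universal iff `w` is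
`k`-universal, i.e. `ι(γ w) = ι(w) + 1`, and the theorem follows by induction on `c`.
-/

theorem List.cons_sublist_append_cons_iff_of_not_mem {α : Type*} {a : α} {l u v : List α}
    (ha : a ∉ l) : (a :: u).Sublist (l ++ a :: v) ↔ u.Sublist v := by
  induction l with
  | nil => exact cons_sublist_cons
  | cons b l ih =>
    obtain ⟨hab, hal⟩ := not_or.mp (mem_cons.not.mp ha)
    rw [cons_append, sublist_cons_iff, ih hal]
    simp [hab]

section Universality

variable {α : Type*} [Fintype α]

theorem IsKUniversal.mono {k l : ℕ} {w : List α} (h : IsKUniversal k w) (hlk : l ≤ k) :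
    IsKUniversal l w :=
  fun u hu => h u (hu.trans hlk)

theorem isKUniversal_zero (w : List α) : IsKUniversal 0 w := by
  intro u hu
  rw [Nat.le_zero, length_eq_zero_iff] at hu
  exact hu ▸ nil_sublist w

theorem bddAbove_setOf_isKUniversal [Nonempty α] (w : List α) :
    BddAbove {k | IsKUniversal k w} := by
  refine ⟨w.length, fun k hk => ?_⟩
  simpa using (hk (replicate k (Classical.arbitrary α)) (by simp)).length_le

theorem le_univIndex_iff [Nonempty α] {k : ℕ} {w : List α} :
    k ≤ univIndex w ↔ IsKUniversal k w := by
  refine ⟨fun hk => ?_, fun hk => le_csSup (bddAbove_setOf_isKUniversal w) hk⟩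
  have huniv : IsKUniversal (univIndex w) w :=
    Nat.sSup_mem ⟨0, isKUniversal_zero w⟩ (bddAbove_setOf_isKUniversal w)
  exact huniv.mono hk

end Universality

section PermWord

variable {α : Type*} [DecidableEq α]

theorem IsPermWord.mem {γ : List α} (hγ : IsPermWord γ) (a : α) : a ∈ γ :=
  count_pos_iff.mp (by rw [hγ a]; exact Nat.one_pos)

theorem IsPermWord.exists_eq_append_singleton [Nonempty α] {γ : List α} (hγ : IsPermWord γ) :
    ∃ l a, γ = l ++ [a] ∧ a ∉ l := by
  rcases eq_nil_or_concat γ with rfl | ⟨l, a, rfl⟩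
  · exact absurd (hγ.mem (Classical.arbitrary α)) not_mem_nil
  · refine ⟨l, a, concat_eq_append, fun hal => ?_⟩
    have hcount := hγ a
    rw [concat_eq_append, count_append, count_singleton_self] at hcount
    exact absurd (count_pos_iff.mpr hal) (by omega)

variable [Fintype α]

theorem IsPermWord.isKUniversal_succ_append_iff [Nonempty α] {γ : List α} (hγ : IsPermWord γ)
    {w : List α} {k : ℕ} : IsKUniversal (k + 1) (γ ++ w) ↔ IsKUniversal k w := by
  constructor
  · intro h u hu
    obtain ⟨l, a, rfl, hal⟩ := hγ.exists_eq_append_singleton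
    have hembed := h (a :: u) (by simpa using hu)
    rwa [append_assoc, singleton_append, cons_sublist_append_cons_iff_of_not_mem hal] at hembed
  · rintro h (_ | ⟨b, u⟩) hu
    · exact nil_sublist _
    · exact (singleton_sublist.mpr (hγ.mem b)).append (h u (by simpa using hu))

theorem IsPermWord.univIndex_append [Nonempty α] {γ : List α} (hγ : IsPermWord γ)
    (w : List α) : univIndex (γ ++ w) = univIndex w + 1 := by
  refine eq_of_forall_le_iff fun k => ?_
  rcases k with _ | k
  · simp
  · rw [le_univIndex_iff, hγ.isKUniversal_succ_append_iff, Nat.succ_le_succ_iff, le_univIndex_iff]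

end PermWord

theorem wpow_succ {α : Type*} (u : List α) (c : ℕ) : wpow u (c + 1) = u ++ wpow u c := by
  simp [wpow, replicate_succ]

/-- prepending `c` copies of a permutation word increases the
universality index by exactly `c`. -/
theorem stmt14 {α : Type*} [Fintype α] [DecidableEq α] [Nonempty α]
    (γ : List α) (hγ : IsPermWord γ) (w : List α) (c : ℕ) :
    univIndex (wpow γ c ++ w) = c + univIndex w := by
  induction c with
  | zero => simp [wpow]
  | succ c ih => rw [wpow_succ, append_assoc, hγ.univIndex_append, ih, add_right_comm]
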